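/- The metric g = dx₁² + e^{2x₁}dx₂² + e^{−2x₁}dx₃² on ℝ³ (the geometry Sol) is an expanding Ricci soliton: with E = −4x₃ ∂/∂x₃ − 2 ∂/∂x₁ and A = 2, one has −2 Ricci(g) = L_E g + 2Ag. Moreover this soliton structure is not of gradient type: E♭ is not closed. -/

import Mathlib

open scoped BigOperators

noncomputable section

/-- Partial derivative of `f` in the `i`-th coordinate direction. -/
def pd {n : ℕ} (f : (Fin n → ℝ) → ℝ) (i : Fin n) (x : Fin n → ℝ) : ℝ :=
  fderiv ℝ f x (Pi.single i 1)

/-- Pointwise inverse of a metric (the components `g^{ij}`). -/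
def ginv {n : ℕ} (g : (Fin n → ℝ) → Matrix (Fin n) (Fin n) ℝ) (x : Fin n → ℝ) :
    Matrix (Fin n) (Fin n) ℝ := (g x)⁻¹

/-- Christoffel symbols `Γ^k_{ij}` of the metric `g`. -/
def christoffel {n : ℕ} (g : (Fin n → ℝ) → Matrix (Fin n) (Fin n) ℝ)
    (k i j : Fin n) (x : Fin n → ℝ) : ℝ :=
  (1 / 2) * ∑ l, ginv g x k l *
    (pd (fun y => g y l j) i x + pd (fun y => g y l i) j x - pd (fun y => g y i j) l x)

/-- The Ricci tensor in coordinates: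
`Ric_{ij} = ∂_k Γ^k_{ij} − ∂_i Γ^k_{kj} + Γ^k_{kl} Γ^l_{ij} − Γ^k_{il} Γ^l_{kj}`. -/
def ricci {n : ℕ} (g : (Fin n → ℝ) → Matrix (Fin n) (Fin n) ℝ)
    (i j : Fin n) (x : Fin n → ℝ) : ℝ :=
  (∑ k, pd (christoffel g k i j) k x) - (∑ k, pd (christoffel g k k j) i x)
    + (∑ k, ∑ l, christoffel g k k l x * christoffel g l i j x)
    - ∑ k, ∑ l, christoffel g k i l x * christoffel g l k j x

/-- Lie derivative of the metric:
`(L_E g)_{ij} = E^k ∂_k g_{ij} + g_{kj} ∂_i E^k + g_{ik} ∂_j E^k`. -/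
def lieD {n : ℕ} (g : (Fin n → ℝ) → Matrix (Fin n) (Fin n) ℝ)
    (E : (Fin n → ℝ) → Fin n → ℝ) (i j : Fin n) (x : Fin n → ℝ) : ℝ :=
  (∑ k, E x k * pd (fun y => g y i j) k x)
    + (∑ k, g x k j * pd (fun y => E y k) i x)
    + ∑ k, g x i k * pd (fun y => E y k) j x

/-- The dual 1-form `E♭ = g(E,·)`. -/
def flat {n : ℕ} (g : (Fin n → ℝ) → Matrix (Fin n) (Fin n) ℝ)
    (E : (Fin n → ℝ) → Fin n → ℝ) (j : Fin n) (x : Fin n → ℝ) : ℝ :=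
  ∑ k, g x j k * E x k

/-- The Sol metric `g = dx₁² + e^{2x₁} dx₂² + e^{−2x₁} dx₃²` on `ℝ³`. -/
def solMetric (x : Fin 3 → ℝ) : Matrix (Fin 3) (Fin 3) ℝ :=
  Matrix.diagonal ![1, Real.exp (2 * x 0), Real.exp (-(2 * x 0))]

/-- The soliton flow on Sol: `E = −2 ∂/∂x₁ − 4x₃ ∂/∂x₃`. -/
def solFlow (x : Fin 3 → ℝ) : Fin 3 → ℝ :=
  ![-2, 0, -(4 * x 2)]

/-!
The Sol metric is diagonal, so `g^{kk} = 1 / g_{kk}` and each Christoffel symbol is half of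
`g^{kk}` times a signed sum of first derivatives of the diagonal entries. The only nonzero ones
are `Γ⁰₁₁ = -e^{2x₀}`, `Γ⁰₂₂ = e^{-2x₀}`, `Γ¹₀₁ = Γ¹₁₀ = 1` and `Γ²₀₂ = Γ²₂₀ = -1`
(coordinates are indexed from `0`, so the paper's `x₁, x₂, x₃` are `x 0, x 1, x 2`). From these,
`Ric = diag(-2, 0, 0)`, while `L_E g = diag(0, -4e^{2x₀}, -4e^{-2x₀})`, and `−2 Ric = L_E g + 4g`
follows entrywise. Finally `E♭ = -2 dx₀ - 4x₂e^{-2x₀} dx₂`, so `∂₀E♭₂ - ∂₂E♭₀ = 8x₂e^{-2x₀}`,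
which does not vanish at `x₂ = 1`.
-/

section PartialDerivative

variable {n : ℕ} {f g : (Fin n → ℝ) → ℝ} {i : Fin n} {x : Fin n → ℝ}

@[simp] lemma pd_const (c : ℝ) : pd (fun _ => c) i x = 0 := by simp [pd]

@[simp] lemma pd_apply (k : Fin n) : pd (fun y => y k) i x = if k = i then 1 else 0 := by
  simp [pd, (hasFDerivAt_apply k x).fderiv, Pi.single_apply]

@[simp] lemma pd_neg : pd (fun y => -f y) i x = -pd f i x := by
  simp [pd, fderiv_fun_neg]

@[simp] lemma pd_const_mul (hf : DifferentiableAt ℝ f x) (c : ℝ) :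
    pd (fun y => c * f y) i x = c * pd f i x := by
  simp [pd, fderiv_const_mul hf]

@[simp] lemma pd_mul (hf : DifferentiableAt ℝ f x) (hg : DifferentiableAt ℝ g x) :
    pd (fun y => f y * g y) i x = f x * pd g i x + g x * pd f i x := by
  simp [pd, fderiv_fun_mul hf hg]

@[simp] lemma pd_exp (hf : DifferentiableAt ℝ f x) :
    pd (fun y => Real.exp (f y)) i x = Real.exp (f x) * pd f i x := by
  simp [pd, fderiv_exp hf]

end PartialDerivative

section Diagonal

variable {n : ℕ} {g : (Fin n → ℝ) → Matrix (Fin n) (Fin n) ℝ} {d : (Fin n → ℝ) → Fin n → ℝ}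
  {x : Fin n → ℝ}

lemma ginv_of_diagonal (hg : ∀ y, g y = Matrix.diagonal (d y)) (hd : ∀ i, d x i ≠ 0) :
    ginv g x = Matrix.diagonal (d x)⁻¹ := by
  rw [ginv, hg]
  refine Matrix.inv_eq_right_inv ?_
  rw [Matrix.diagonal_mul_diagonal, ← Matrix.diagonal_one]
  congr 1
  funext i
  exact mul_inv_cancel₀ (hd i)

lemma christoffel_of_diagonal (hg : ∀ y, g y = Matrix.diagonal (d y)) (hd : ∀ i, d x i ≠ 0)
    (k i j : Fin n) :
    christoffel g k i j x = (d x k)⁻¹ / 2 *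
      (pd (fun y => g y k j) i x + pd (fun y => g y k i) j x - pd (fun y => g y i j) k x) := by
  simp only [christoffel, ginv_of_diagonal hg hd, Matrix.diagonal_apply, ite_mul, zero_mul,
    Finset.sum_ite_eq, Finset.mem_univ, if_true, Pi.inv_apply]
  ring

end Diagonal

def solChristoffel : Fin 3 → Fin 3 → Fin 3 → (Fin 3 → ℝ) → ℝ :=
  ![![![fun _ => 0, fun _ => 0, fun _ => 0],
      ![fun _ => 0, fun x => -Real.exp (2 * x 0), fun _ => 0],
      ![fun _ => 0, fun _ => 0, fun x => Real.exp (-(2 * x 0))]],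
    ![![fun _ => 0, fun _ => 1, fun _ => 0],
      ![fun _ => 1, fun _ => 0, fun _ => 0],
      ![fun _ => 0, fun _ => 0, fun _ => 0]],
    ![![fun _ => 0, fun _ => 0, fun _ => -1],
      ![fun _ => 0, fun _ => 0, fun _ => 0],
      ![fun _ => -1, fun _ => 0, fun _ => 0]]]

lemma christoffel_solMetric (k i j : Fin 3) :
    christoffel solMetric k i j = solChristoffel k i j := by
  funext x
  have hd : ∀ i, ![1, Real.exp (2 * x 0), Real.exp (-(2 * x 0))] i ≠ 0 := by
    intro i; fin_cases i <;> simp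
  rw [christoffel_of_diagonal (g := solMetric) (fun _ => rfl) hd]
  fin_cases k <;> fin_cases i <;> fin_cases j <;>
    simp (disch := fun_prop) [solMetric, solChristoffel, Matrix.diagonal_apply] <;>
    field_simp [Real.exp_neg]

lemma ricci_solMetric (i j : Fin 3) (x : Fin 3 → ℝ) :
    ricci solMetric i j x = Matrix.diagonal ![-2, 0, 0] i j := by
  simp only [ricci, christoffel_solMetric, Fin.sum_univ_three]
  fin_cases i <;> fin_cases j <;>
    simp (disch := fun_prop) [solChristoffel, Matrix.diagonal_apply] <;>
    field_simp [Real.exp_neg] <;> ring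

lemma lieD_solMetric_solFlow (i j : Fin 3) (x : Fin 3 → ℝ) :
    lieD solMetric solFlow i j x =
      Matrix.diagonal ![0, -4 * Real.exp (2 * x 0), -4 * Real.exp (-(2 * x 0))] i j := by
  simp only [lieD, Fin.sum_univ_three]
  fin_cases i <;> fin_cases j <;>
    simp (disch := fun_prop) [solMetric, solFlow, Matrix.diagonal_apply] <;> ring

lemma pd_flat_solFlow_sub (x : Fin 3 → ℝ) :
    pd (flat solMetric solFlow 2) 0 x - pd (flat solMetric solFlow 0) 2 x =
      8 * x 2 * Real.exp (-(2 * x 0)) := by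
  unfold flat
  simp (disch := fun_prop) [solMetric, solFlow, Matrix.diagonal_apply]
  ring

/-- Sol is an expanding Ricci soliton: with
`E = −4x₃ ∂/∂x₃ − 2 ∂/∂x₁` and `A = 2` one has `−2 Ricci(g) = L_E g + 2Ag`; moreover this
soliton structure is not of gradient type: `E♭` is not closed. -/
theorem sol_is_expanding_nongradient_soliton :
    (∀ (x : Fin 3 → ℝ) (i j : Fin 3),
      -2 * ricci solMetric i j x =
        lieD solMetric solFlow i j x + 2 * 2 * solMetric x i j) ∧
    ¬(∀ (x : Fin 3 → ℝ) (i j : Fin 3),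
        pd (flat solMetric solFlow j) i x - pd (flat solMetric solFlow i) j x = 0) := by
  refine ⟨fun x i j => ?_, fun hclosed => ?_⟩
  · rw [ricci_solMetric, lieD_solMetric_solFlow]
    fin_cases i <;> fin_cases j <;> simp [solMetric] <;> ring
  · have h := hclosed ![0, 0, 1] 0 2
    rw [pd_flat_solFlow_sub] at h
    simp at h
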